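/- arXiv:2602.21665 — 2 statements merged into one kernel-verified Lean document; each statement's English description precedes it below -/
import Mathlib

section
/- There exists a constant C > 0 such that for all t > 0 and all f ∈ H¹(ℝ²), one has ‖e^{tΔ}f‖_{L^∞(ℝ²)} ≤ C (log(e + 1/t))^{1/2} ‖f‖_{H¹(ℝ²)}. -/
/-!
Bounding the inverse Fourier integral by the integral of the absolute value,
`|e^{tΔ}f(x)| ≤ (2π)⁻¹ ∫ e^{-t|ξ|²} |𝓕f(ξ)| dξ`, and applying Cauchy–Schwarz to
`(e^{-t|ξ|²} (1 + |ξ|²)^{-1/2}) · ((1 + |ξ|²)^{1/2} |𝓕f(ξ)|)` gives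
`‖e^{tΔ}f‖_∞ ≤ (2π)⁻¹ (∫ e^{-2t|ξ|²} / (1 + |ξ|²) dξ)^{1/2} ‖f‖_{H¹}`.
In polar coordinates the last integral is `2π ∫₀^∞ r e^{-2tr²} / (1 + r²) dr`. Split it at
`R² = log (e + 1/t) / t`: on `(0, R]` drop the Gaussian, leaving `log (1 + R²) / 2 ≤ log (e + 1/t)`;
beyond `R` drop `1 / (1 + r²)`, leaving the Gaussian tail `e^{-2tR²} / (4t) ≤ 1/4`.
-/

open MeasureTheory Real Set

noncomputable section

abbrev R2 := EuclideanSpace ℝ (Fin 2)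

/-- Fourier transform on ℝ² with normalization (2π)⁻¹ ∫ e^{-ix·ξ} f(x) dx. -/
def FT (f : R2 → ℂ) (ξ : R2) : ℂ :=
  (1 / (2 * (π : ℂ))) * ∫ x : R2, Complex.exp (-Complex.I * ((inner ℝ x ξ : ℝ) : ℂ)) * f x

/-- Inverse Fourier transform. -/
def invFT (g : R2 → ℂ) (x : R2) : ℂ :=
  (1 / (2 * (π : ℂ))) * ∫ ξ : R2, Complex.exp (Complex.I * ((inner ℝ x ξ : ℝ) : ℂ)) * g ξ

/-- Heat semigroup e^{tΔ} = 𝓕⁻¹ e^{-t|ξ|²} 𝓕. -/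
def heat (t : ℝ) (f : R2 → ℂ) : R2 → ℂ :=
  invFT (fun ξ => Complex.exp (-(t : ℂ) * (‖ξ‖ : ℂ) ^ 2) * FT f ξ)

/-- H¹ norm via the Fourier transform. -/
def H1norm (f : R2 → ℂ) : ℝ :=
  (∫ ξ : R2, (1 + ‖ξ‖ ^ 2) * ‖FT f ξ‖ ^ 2) ^ (1 / 2 : ℝ)

/-- Membership in H¹(ℝ²). -/
def MemH1 (f : R2 → ℂ) : Prop :=
  MemLp f 2 volume ∧ Integrable (fun ξ : R2 => (1 + ‖ξ‖ ^ 2) * ‖FT f ξ‖ ^ 2)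

/-- Exponential integral E₁. -/
def E1 (τ : ℝ) : ℝ := ∫ ρ in Ioi τ, Real.exp (-ρ) / ρ

open Filter Topology

lemma integral_Ioi_mul_exp_neg_mul_sq {b : ℝ} (hb : 0 < b) (R : ℝ) :
    ∫ r in Ioi R, r * exp (-b * r ^ 2) = exp (-b * R ^ 2) / (2 * b) := by
  have hderiv : ∀ x ∈ Ici R, HasDerivAt (fun r ↦ -exp (-b * r ^ 2) / (2 * b))
      (x * exp (-b * x ^ 2)) x := by
    intro x _
    refine ((((hasDerivAt_pow 2 x).const_mul (-b)).exp.neg).div_const (2 * b)).congr_deriv ?_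
    field_simp
    ring
  have hlim : Tendsto (fun r ↦ -exp (-b * r ^ 2) / (2 * b)) atTop (𝓝 0) := by
    have hsq : Tendsto (fun r : ℝ ↦ -b * r ^ 2) atTop atBot :=
      (tendsto_pow_atTop two_ne_zero).const_mul_atTop_of_neg (neg_neg_of_pos hb)
    simpa using (tendsto_exp_atBot.comp hsq).neg.div_const (2 * b)
  rw [integral_Ioi_of_hasDerivAt_of_tendsto' hderiv
    (integrable_mul_exp_neg_mul_sq hb).integrableOn hlim]
  ring

lemma integral_Ioc_div_one_add_sq {R : ℝ} (hR : 0 ≤ R) :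
    ∫ r in Ioc 0 R, r / (1 + r ^ 2) = log (1 + R ^ 2) / 2 := by
  have hderiv : ∀ x ∈ uIcc 0 R, HasDerivAt (fun r ↦ log (1 + r ^ 2) / 2) (x / (1 + x ^ 2)) x := by
    intro x _
    refine ((((hasDerivAt_pow 2 x).const_add 1).log (by positivity)).div_const 2).congr_deriv ?_
    field_simp
    ring
  have hcont : Continuous fun r : ℝ ↦ r / (1 + r ^ 2) :=
    continuous_id.div (by fun_prop) fun x ↦ by positivity
  rw [← intervalIntegral.integral_of_le hR,
    intervalIntegral.integral_eq_sub_of_hasDerivAt hderiv (hcont.intervalIntegrable 0 R)]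
  simp

lemma mul_exp_div_one_add_sq_le {b r : ℝ} (hr : 0 ≤ r) :
    r * (exp (-b * r ^ 2) / (1 + r ^ 2)) ≤ r * exp (-b * r ^ 2) :=
  mul_le_mul_of_nonneg_left (div_le_self (exp_nonneg _) (by nlinarith)) hr

lemma integrableOn_mul_exp_div_one_add_sq {b : ℝ} (hb : 0 < b) :
    IntegrableOn (fun r ↦ r * (exp (-b * r ^ 2) / (1 + r ^ 2))) (Ioi 0) := by
  refine (integrable_mul_exp_neg_mul_sq hb).integrableOn.mono' (by fun_prop) ?_
  filter_upwards [ae_restrict_mem measurableSet_Ioi] with r (hr : 0 < r)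
  rw [Real.norm_of_nonneg (by positivity)]
  exact mul_exp_div_one_add_sq_le hr.le

lemma integral_mul_exp_div_one_add_sq_le {b R : ℝ} (hb : 0 < b) (hR : 0 ≤ R) :
    ∫ r in Ioi 0, r * (exp (-b * r ^ 2) / (1 + r ^ 2)) ≤
      log (1 + R ^ 2) / 2 + exp (-b * R ^ 2) / (2 * b) := by
  have hint := integrableOn_mul_exp_div_one_add_sq hb
  rw [← Ioc_union_Ioi_eq_Ioi hR, setIntegral_union (Ioc_disjoint_Ioi le_rfl) measurableSet_Ioi
    (hint.mono_set Ioc_subset_Ioi_self) (hint.mono_set (Ioi_subset_Ioi hR)),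
    ← integral_Ioc_div_one_add_sq hR, ← integral_Ioi_mul_exp_neg_mul_sq hb R]
  gcongr ?_ + ?_
  · refine setIntegral_mono_on (hint.mono_set Ioc_subset_Ioi_self)
      ((continuous_id.div (by fun_prop) fun x ↦ by positivity).integrableOn_Ioc)
      measurableSet_Ioc fun r hr ↦ ?_
    rw [mul_div_assoc']
    exact div_le_div_of_nonneg_right
      (mul_le_of_le_one_right hr.1.le (exp_le_one_iff.2 (by nlinarith [hr.1]))) (by positivity)
  · exact setIntegral_mono_on (hint.mono_set (Ioi_subset_Ioi hR))
      (integrable_mul_exp_neg_mul_sq hb).integrableOn measurableSet_Ioi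
      fun r hr ↦ mul_exp_div_one_add_sq_le (hR.trans (le_of_lt hr))

lemma one_le_log_exp_one_add {x : ℝ} (hx : 0 ≤ x) : 1 ≤ log (exp 1 + x) :=
  (log_exp 1).symm.trans_le (log_le_log (exp_pos 1) (le_add_of_nonneg_right hx))

lemma integral_mul_exp_div_one_add_sq_le_log {t : ℝ} (ht : 0 < t) :
    ∫ r in Ioi 0, r * (exp (-(2 * t) * r ^ 2) / (1 + r ^ 2)) ≤ log (exp 1 + 1 / t) + 1 / 4 := by
  set s := exp 1 + 1 / t
  set L := log s
  have hts : 1 / t ≤ s := le_add_of_nonneg_left (exp_nonneg 1)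
  have hs : 0 < s := by positivity
  have hL : 1 ≤ L := one_le_log_exp_one_add (one_div_pos.2 ht).le
  have hLs : L ≤ s - 1 := log_le_sub_one_of_pos hs
  set R := √(L / t)
  have hR : R ^ 2 = L / t := sq_sqrt (by positivity)
  refine (integral_mul_exp_div_one_add_sq_le (R := R) (by positivity) (sqrt_nonneg _)).trans
    (add_le_add ?_ ?_)
  · have hsq : 1 + R ^ 2 ≤ s ^ 2 := by
      rw [hR, div_eq_mul_one_div]
      nlinarith [mul_le_mul hLs hts (by positivity) (by linarith)]
    have := log_le_log (by positivity) hsq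
    rw [log_pow] at this
    push_cast at this
    linarith
  · have hexp : exp (-(2 * t) * R ^ 2) ≤ t := calc
      exp (-(2 * t) * R ^ 2) = exp (-L) ^ 2 := by
        rw [hR, ← exp_nat_mul]
        field_simp
        ring_nf
      _ ≤ exp (-L) := pow_le_of_le_one (exp_nonneg _) (exp_le_one_iff.2 (by linarith)) two_ne_zero
      _ = s⁻¹ := by rw [exp_neg, exp_log hs]
      _ ≤ t := by rw [inv_le_comm₀ hs ht, inv_eq_one_div]; exact hts
    rw [div_le_iff₀ (by positivity)]
    linarith

lemma integral_fun_norm_R2 {F : Type*} [NormedAddCommGroup F] [NormedSpace ℝ F] (f : ℝ → F) :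
    ∫ x : R2, f ‖x‖ = (2 * π) • ∫ r in Ioi 0, r • f r := by
  rw [integral_fun_norm_addHaar volume f]
  simp only [finrank_euclideanSpace_fin, measureReal_def, EuclideanSpace.volume_ball_fin_two]
  rw [← Nat.cast_smul_eq_nsmul ℝ, smul_smul]
  norm_num [pi_nonneg]

lemma integrable_fun_norm_R2 {F : Type*} [NormedAddCommGroup F] [NormedSpace ℝ F] {f : ℝ → F} :
    Integrable (fun x : R2 ↦ f ‖x‖) ↔ IntegrableOn (fun r ↦ r • f r) (Ioi 0) := by
  simp [integrable_fun_norm_addHaar volume (f := f)]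

lemma integrable_exp_div_one_add_sq_norm {b : ℝ} (hb : 0 < b) :
    Integrable fun ξ : R2 ↦ exp (-b * ‖ξ‖ ^ 2) / (1 + ‖ξ‖ ^ 2) :=
  integrable_fun_norm_R2.2 (integrableOn_mul_exp_div_one_add_sq hb)

lemma integral_exp_div_one_add_sq_norm_le {t : ℝ} (ht : 0 < t) :
    ∫ ξ : R2, exp (-(2 * t) * ‖ξ‖ ^ 2) / (1 + ‖ξ‖ ^ 2) ≤ (2 * π) ^ 2 * log (exp 1 + 1 / t) := by
  have hL := one_le_log_exp_one_add (one_div_pos.2 ht).le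
  have h2π : log (exp 1 + 1 / t) + 1 / 4 ≤ 2 * π * log (exp 1 + 1 / t) := by
    nlinarith [pi_gt_three]
  rw [integral_fun_norm_R2 (fun r : ℝ ↦ exp (-(2 * t) * r ^ 2) / (1 + r ^ 2))]
  simp only [smul_eq_mul]
  calc 2 * π * ∫ r in Ioi 0, r * (exp (-(2 * t) * r ^ 2) / (1 + r ^ 2))
      ≤ 2 * π * (log (exp 1 + 1 / t) + 1 / 4) := by
        gcongr
        exact integral_mul_exp_div_one_add_sq_le_log ht
    _ ≤ 2 * π * (2 * π * log (exp 1 + 1 / t)) := by gcongr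
    _ = (2 * π) ^ 2 * log (exp 1 + 1 / t) := by ring

lemma integral_mul_le_sqrt_mul_sqrt {α : Type*} [MeasurableSpace α] {μ : Measure α}
    {f g : α → ℝ} (hf₀ : 0 ≤ᵐ[μ] f) (hg₀ : 0 ≤ᵐ[μ] g) (hf : MemLp f 2 μ) (hg : MemLp g 2 μ) :
    ∫ a, f a * g a ∂μ ≤ √(∫ a, f a ^ 2 ∂μ) * √(∫ a, g a ^ 2 ∂μ) := by
  have := integral_mul_le_Lp_mul_Lq_of_nonneg Real.HolderConjugate.two_two hf₀ hg₀
    (by simpa using hf) (by simpa using hg)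
  simpa [sqrt_eq_rpow, rpow_two] using this

lemma norm_heat_le (t : ℝ) (f : R2 → ℂ) (x : R2) :
    ‖heat t f x‖ ≤ (2 * π)⁻¹ * ∫ ξ, exp (-t * ‖ξ‖ ^ 2) * ‖FT f ξ‖ := by
  have hc : ‖1 / (2 * (π : ℂ))‖ = (2 * π)⁻¹ := by simp [abs_of_pos pi_pos]
  rw [heat, invFT, norm_mul, hc]
  gcongr
  refine (norm_integral_le_integral_norm _).trans_eq (integral_congr_ae (.of_forall fun ξ ↦ ?_))
  have hphase : ‖Complex.exp (Complex.I * ((inner ℝ x ξ : ℝ) : ℂ))‖ = 1 := by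
    rw [Complex.norm_exp]; simp
  have hgauss : ‖Complex.exp (-(t : ℂ) * (‖ξ‖ : ℂ) ^ 2)‖ = exp (-t * ‖ξ‖ ^ 2) := by
    rw [Complex.norm_exp]; norm_cast
  simp only [norm_mul, hphase, hgauss, one_mul]

lemma H1norm_nonneg (f : R2 → ℂ) : 0 ≤ H1norm f :=
  rpow_nonneg (integral_nonneg fun ξ ↦ by positivity) _

lemma integral_exp_mul_norm_FT_le {t : ℝ} (ht : 0 < t) {f : R2 → ℂ}
    (hf : Integrable fun ξ : R2 ↦ (1 + ‖ξ‖ ^ 2) * ‖FT f ξ‖ ^ 2) :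
    ∫ ξ, exp (-t * ‖ξ‖ ^ 2) * ‖FT f ξ‖ ≤
      √(∫ ξ : R2, exp (-(2 * t) * ‖ξ‖ ^ 2) / (1 + ‖ξ‖ ^ 2)) * H1norm f := by
  set w : R2 → ℝ := fun ξ ↦ exp (-t * ‖ξ‖ ^ 2) / √(1 + ‖ξ‖ ^ 2)
  set h : R2 → ℝ := fun ξ ↦ √((1 + ‖ξ‖ ^ 2) * ‖FT f ξ‖ ^ 2)
  have hwh (ξ : R2) : w ξ * h ξ = exp (-t * ‖ξ‖ ^ 2) * ‖FT f ξ‖ := by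
    have : 0 < √(1 + ‖ξ‖ ^ 2) := sqrt_pos.2 (by positivity)
    simp only [w, h]
    rw [sqrt_mul (by positivity), sqrt_sq (norm_nonneg _)]
    field_simp
  have hw2 (ξ : R2) : w ξ ^ 2 = exp (-(2 * t) * ‖ξ‖ ^ 2) / (1 + ‖ξ‖ ^ 2) := by
    simp only [w]
    rw [div_pow, sq_sqrt (by positivity), ← exp_nat_mul]
    ring_nf
  have hh2 (ξ : R2) : h ξ ^ 2 = (1 + ‖ξ‖ ^ 2) * ‖FT f ξ‖ ^ 2 := sq_sqrt (by positivity)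
  have hw : MemLp w 2 volume := by
    refine (memLp_two_iff_integrable_sq (by fun_prop)).2 ?_
    simpa only [hw2] using integrable_exp_div_one_add_sq_norm (by positivity : 0 < 2 * t)
  have hh : MemLp h 2 volume :=
    (memLp_two_iff_integrable_sq (continuous_sqrt.comp_aestronglyMeasurable
      hf.aestronglyMeasurable)).2 (hf.congr (.of_forall fun ξ ↦ (hh2 ξ).symm))
  have := integral_mul_le_sqrt_mul_sqrt (.of_forall fun ξ ↦ by positivity)
    (.of_forall fun ξ ↦ by positivity) hw hh
  simp only [hwh, hw2, hh2] at this
  rwa [H1norm, ← sqrt_eq_rpow]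

theorem stmt0 :
    ∃ C > (0 : ℝ), ∀ t > (0 : ℝ), ∀ f : R2 → ℂ, MemH1 f →
      eLpNorm (heat t f) ⊤ volume ≤
        ENNReal.ofReal (C * Real.sqrt (Real.log (Real.exp 1 + 1 / t)) * H1norm f) := by
  refine ⟨1, one_pos, fun t ht f hf ↦ ?_⟩
  rw [eLpNorm_exponent_top, one_mul]
  refine eLpNormEssSup_le_of_ae_bound (.of_forall fun x ↦ ?_)
  have hf₁ := H1norm_nonneg f
  calc ‖heat t f x‖ ≤ (2 * π)⁻¹ * ∫ ξ, exp (-t * ‖ξ‖ ^ 2) * ‖FT f ξ‖ := norm_heat_le t f x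
    _ ≤ (2 * π)⁻¹ * (√(∫ ξ : R2, exp (-(2 * t) * ‖ξ‖ ^ 2) / (1 + ‖ξ‖ ^ 2)) * H1norm f) := by
        gcongr
        exact integral_exp_mul_norm_FT_le ht hf.2
    _ ≤ (2 * π)⁻¹ * (√((2 * π) ^ 2 * log (exp 1 + 1 / t)) * H1norm f) := by
        gcongr
        exact integral_exp_div_one_add_sq_norm_le ht
    _ = √(log (exp 1 + 1 / t)) * H1norm f := by
        rw [sqrt_mul (by positivity), sqrt_sq (by positivity)]
        field_simp
end
end

section
/- For every t > 0, the exponential integral satisfies E₁(2t) ≤ (e^{2/e}/2) · log(e + 1/t). -/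
open MeasureTheory Real Set

noncomputable section

/-
On `[1, ∞)` the weight `1/ρ` is at most `1`, so `E₁(τ) ≤ e^{-τ}/τ ≤ 1`. On `(0, 1)` one splits the
integral at `1` and bounds `e^{-ρ} ≤ 1` on `(τ, 1]`, giving `E₁(τ) ≤ -log τ + e⁻¹`, and `e⁻¹ < log 2`.
Either way `E₁(τ) ≤ log (e + 2/τ)`, and the constant `e^{2/e}/2` is at least `1` since `log 2 < 2/e`.
-/

lemma integrableOn_exp_neg_div_self_Ioi {τ : ℝ} (hτ : 0 < τ) :
    IntegrableOn (fun ρ => exp (-ρ) / ρ) (Ioi τ) := by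
  refine ((integrableOn_exp_neg_Ioi τ).div_const τ).mono' ?_ ?_
  · exact ((measurable_exp.comp measurable_neg).div measurable_id).aestronglyMeasurable
  · filter_upwards [ae_restrict_mem measurableSet_Ioi] with ρ (hρ : τ < ρ)
    rw [norm_of_nonneg (div_nonneg (exp_pos _).le (hτ.trans hρ).le)]
    exact div_le_div_of_nonneg_left (exp_pos _).le hτ hρ.le

lemma E1_le_exp_neg_div {τ : ℝ} (hτ : 0 < τ) : E1 τ ≤ exp (-τ) / τ := by
  rw [← integral_exp_neg_Ioi, ← integral_div]
  refine setIntegral_mono_on (integrableOn_exp_neg_div_self_Ioi hτ)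
    ((integrableOn_exp_neg_Ioi τ).div_const τ) measurableSet_Ioi fun ρ (hρ : τ < ρ) => ?_
  exact div_le_div_of_nonneg_left (exp_pos _).le hτ hρ.le

lemma E1_le_neg_log_add_exp_neg_one {τ : ℝ} (hτ : 0 < τ) (hτ1 : τ ≤ 1) :
    E1 τ ≤ -log τ + exp (-1) := by
  have hint : IntegrableOn (fun ρ => exp (-ρ) / ρ) (Ioc τ 1) :=
    (integrableOn_exp_neg_div_self_Ioi hτ).mono_set Ioc_subset_Ioi_self
  have hsplit : E1 τ = (∫ ρ in Ioc τ 1, exp (-ρ) / ρ) + E1 1 := by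
    rw [E1, E1, ← setIntegral_union (Ioc_disjoint_Ioi le_rfl) measurableSet_Ioi hint
      (integrableOn_exp_neg_div_self_Ioi one_pos), Ioc_union_Ioi_eq_Ioi hτ1]
  have hinv : IntegrableOn (fun ρ : ℝ => ρ⁻¹) (Ioc τ 1) := by
    rw [← intervalIntegrable_iff_integrableOn_Ioc_of_le hτ1]
    refine intervalIntegral.intervalIntegrable_inv (fun ρ hρ => ?_) continuousOn_id
    rw [uIcc_of_le hτ1] at hρ
    exact (hτ.trans_le hρ.1).ne'
  have hnear : (∫ ρ in Ioc τ 1, exp (-ρ) / ρ) ≤ -log τ :=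
    calc (∫ ρ in Ioc τ 1, exp (-ρ) / ρ) ≤ ∫ ρ in Ioc τ 1, ρ⁻¹ := by
          refine setIntegral_mono_on hint hinv measurableSet_Ioc fun ρ hρ => ?_
          rw [div_eq_mul_inv]
          exact mul_le_of_le_one_left (inv_nonneg.2 (hτ.trans hρ.1).le)
            (exp_le_one_iff.2 (by linarith [hτ.trans hρ.1]))
      _ = -log τ := by
          rw [← intervalIntegral.integral_of_le hτ1, integral_inv_of_pos hτ one_pos, one_div,
            log_inv]
  have hfar : E1 1 ≤ exp (-1) := by simpa using E1_le_exp_neg_div one_pos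
  linarith

lemma exp_neg_one_lt_log_two : exp (-1) < log 2 := by
  rw [exp_neg, inv_lt_iff_one_lt_mul₀ (exp_pos 1)]
  nlinarith [exp_one_gt_d9, log_two_gt_d9]

lemma E1_le_log_exp_one_add {τ : ℝ} (hτ : 0 < τ) : E1 τ ≤ log (exp 1 + 2 / τ) := by
  have h2τ : 0 < 2 / τ := by positivity
  rcases le_or_gt 1 τ with h1 | h1
  · calc E1 τ ≤ exp (-τ) / τ := E1_le_exp_neg_div hτ
      _ ≤ 1 := div_le_one_of_le₀ ((exp_le_one_iff.2 (by linarith)).trans h1) hτ.le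
      _ = log (exp 1) := (log_exp 1).symm
      _ ≤ log (exp 1 + 2 / τ) := log_le_log (exp_pos 1) (by linarith)
  · calc E1 τ ≤ -log τ + exp (-1) := E1_le_neg_log_add_exp_neg_one hτ h1.le
      _ ≤ log (2 / τ) := by
          rw [log_div two_ne_zero hτ.ne']
          linarith [exp_neg_one_lt_log_two]
      _ ≤ log (exp 1 + 2 / τ) := log_le_log h2τ (by linarith [exp_pos 1])

lemma one_le_exp_two_div_exp_one_div_two : 1 ≤ exp (2 / exp 1) / 2 := by
  have hlog : log 2 ≤ 2 / exp 1 := by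
    rw [le_div_iff₀ (exp_pos 1)]
    nlinarith [log_two_lt_d9, exp_one_lt_d9, log_two_gt_d9]
  rw [le_div_iff₀ two_pos, one_mul]
  calc (2 : ℝ) = exp (log 2) := (exp_log two_pos).symm
    _ ≤ exp (2 / exp 1) := exp_le_exp.2 hlog

theorem stmt4 (t : ℝ) (ht : 0 < t) :
    E1 (2 * t) ≤ Real.exp (2 / Real.exp 1) / 2 * Real.log (Real.exp 1 + 1 / t) := by
  have hE := E1_le_log_exp_one_add (by positivity : 0 < 2 * t)
  rw [show 2 / (2 * t) = 1 / t by field_simp] at hE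
  have hlog : 0 ≤ log (exp 1 + 1 / t) :=
    log_nonneg (by linarith [add_one_le_exp 1, (by positivity : 0 < 1 / t)])
  exact hE.trans (le_mul_of_one_le_left hlog one_le_exp_two_div_exp_one_div_two)
end
end
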